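/- arXiv:2401.14160 — 2 statements merged into one kernel-verified Lean document; each statement's English description precedes it below -/
import Mathlib

section
/- (Chain rule of semantic mutual information) For any joint probability mass function p on the product of finite sets U and V and any partitions {U_s : s ∈ S} of U and {V_t : t ∈ T} of V, the following chain of inequalities holds: I_s(Ũ;Ṽ) ≤ H_s(Ṽ) − H(V|U) ≤ I(U;V) ≤ H(V) − H_s(Ṽ|U) ≤ I^s(Ũ;Ṽ), where I_s(Ũ;Ṽ) = H_s(Ũ) + H_s(Ṽ) − H(U,V) is the down semantic mutual information and I^s(Ũ;Ṽ) = H(U) + H(V) − H_s(Ũ,Ṽ) is the up semantic mutual information. -/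
open Finset
open scoped Classical

/-- Probability of a class of the partition induced by a class-index map `c`:
`P(U_s) = Σ_{u ∈ U_s} p u`. -/
noncomputable def Pclass {U S : Type*} [Fintype U] (p : U → ℝ) (c : U → S) (s : S) : ℝ :=
  ∑ u : U, if c u = s then p u else 0

/-- Semantic entropy `H_s(Ũ) = −Σ_s P(U_s) log₂ P(U_s)`. -/
noncomputable def semEntropy {U S : Type*} [Fintype U] [Fintype S]
    (p : U → ℝ) (c : U → S) : ℝ :=
  -∑ s : S, Pclass p c s * Real.logb 2 (Pclass p c s)

/-- Shannon entropy `H(U) = −Σ_u p(u) log₂ p(u)`. -/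
noncomputable def shEntropy {U : Type*} [Fintype U] (p : U → ℝ) : ℝ :=
  -∑ u : U, p u * Real.logb 2 (p u)

/-- Probability of a product class `P(U_s × V_t) = Σ_{u∈U_s} Σ_{v∈V_t} p(u,v)`. -/
noncomputable def PjointClass {U V S T : Type*} [Fintype U] [Fintype V]
    (p : U → V → ℝ) (cU : U → S) (cV : V → T) (s : S) (t : T) : ℝ :=
  ∑ u : U, ∑ v : V, if cU u = s ∧ cV v = t then p u v else 0

/-- Semantic joint entropy `H_s(Ũ,Ṽ) = −Σ_{s,t} P(U_s × V_t) log₂ P(U_s × V_t)`. -/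
noncomputable def semJointEntropy {U V S T : Type*} [Fintype U] [Fintype V] [Fintype S] [Fintype T]
    (p : U → V → ℝ) (cU : U → S) (cV : V → T) : ℝ :=
  -∑ s : S, ∑ t : T, PjointClass p cU cV s t * Real.logb 2 (PjointClass p cU cV s t)

/-- Shannon joint entropy `H(U,V) = −Σ_{u,v} p(u,v) log₂ p(u,v)`. -/
noncomputable def shJointEntropy {U V : Type*} [Fintype U] [Fintype V] (p : U → V → ℝ) : ℝ :=
  -∑ u : U, ∑ v : V, p u v * Real.logb 2 (p u v)

/-- Marginal `p(u) = Σ_v p(u,v)`. -/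
noncomputable def margU {U V : Type*} [Fintype V] (p : U → V → ℝ) (u : U) : ℝ :=
  ∑ v : V, p u v

/-- Marginal `p(v) = Σ_u p(u,v)`. -/
noncomputable def margV {U V : Type*} [Fintype U] (p : U → V → ℝ) (v : V) : ℝ :=
  ∑ u : U, p u v

/-- `p(U_s, v) = Σ_{u ∈ U_s} p(u,v)`. -/
noncomputable def PclassU {U V S : Type*} [Fintype U]
    (p : U → V → ℝ) (cU : U → S) (s : S) (v : V) : ℝ :=
  ∑ u : U, if cU u = s then p u v else 0

/-- `p(u, V_t) = Σ_{v ∈ V_t} p(u,v)`. -/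
noncomputable def PclassV {U V T : Type*} [Fintype V]
    (p : U → V → ℝ) (cV : V → T) (u : U) (t : T) : ℝ :=
  ∑ v : V, if cV v = t then p u v else 0

/-- Semantic conditional entropy
`H_s(Ũ|V) = −Σ_v Σ_s p(U_s, v) log₂ (p(U_s, v)/p(v))` (terms with `p(v) = 0` vanish). -/
noncomputable def semCondEntropyU {U V S : Type*} [Fintype U] [Fintype V] [Fintype S]
    (p : U → V → ℝ) (cU : U → S) : ℝ :=
  -∑ v : V, ∑ s : S, PclassU p cU s v * Real.logb 2 (PclassU p cU s v / margV p v)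

/-- Semantic conditional entropy
`H_s(Ṽ|U) = −Σ_u Σ_t p(u, V_t) log₂ (p(u, V_t)/p(u))` (terms with `p(u) = 0` vanish). -/
noncomputable def semCondEntropyV {U V T : Type*} [Fintype U] [Fintype V] [Fintype T]
    (p : U → V → ℝ) (cV : V → T) : ℝ :=
  -∑ u : U, ∑ t : T, PclassV p cV u t * Real.logb 2 (PclassV p cV u t / margU p u)

/-- Shannon conditional entropy `H(U|V) = −Σ_{u,v} p(u,v) log₂ (p(u,v)/p(v))`
(terms with `p(v) = 0` vanish). -/
noncomputable def shCondEntropyU {U V : Type*} [Fintype U] [Fintype V] (p : U → V → ℝ) : ℝ :=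
  -∑ u : U, ∑ v : V, p u v * Real.logb 2 (p u v / margV p v)

/-- Mutual information `I(U;V) = H(U) + H(V) − H(U,V)`. -/
noncomputable def mutualInfo {U V : Type*} [Fintype U] [Fintype V] (p : U → V → ℝ) : ℝ :=
  shEntropy (margU p) + shEntropy (margV p) - shJointEntropy p

/-- Down semantic mutual information `I_s(Ũ;Ṽ) = H_s(Ũ) + H_s(Ṽ) − H(U,V)`. -/
noncomputable def downSMI {U V S T : Type*} [Fintype U] [Fintype V] [Fintype S] [Fintype T]
    (p : U → V → ℝ) (cU : U → S) (cV : V → T) : ℝ :=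
  semEntropy (margU p) cU + semEntropy (margV p) cV - shJointEntropy p

/-- Up semantic mutual information `I^s(Ũ;Ṽ) = H(U) + H(V) − H_s(Ũ,Ṽ)`. -/
noncomputable def upSMI {U V S T : Type*} [Fintype U] [Fintype V] [Fintype S] [Fintype T]
    (p : U → V → ℝ) (cU : U → S) (cV : V → T) : ℝ :=
  shEntropy (margU p) + shEntropy (margV p) - semJointEntropy p cU cV

/-!
Every inequality of the chain comes from one fact: merging the outcomes of a nonnegative mass
function into classes can only lower its entropy, because `q i * log q i ≤ q i * log Q` for the
mass `Q ≥ q i` of the class of `i`. Joint entropies are entropies of `uncurry p`, and the semantic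
conditional entropy satisfies `H_s(Ṽ|U) = H(U,Ṽ) − H(U)`, where `H(U,Ṽ) = semJointEntropy p id cV`
only merges `V`. Hence `H_s(Ũ,Ṽ) ≤ H(U,Ṽ) ≤ H(U,V)`, which together with `H_s(Ũ) ≤ H(U)` and
`H_s(Ṽ) ≤ H(V)` gives the four inequalities.
-/

open Real Function

lemma sum_mul_logb_le_mul_logb_sum {ι : Type*} {b : ℝ} (hb : 1 < b) (s : Finset ι) {q : ι → ℝ}
    (hq : ∀ i ∈ s, 0 ≤ q i) :
    ∑ i ∈ s, q i * logb b (q i) ≤ (∑ i ∈ s, q i) * logb b (∑ i ∈ s, q i) := by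
  rw [sum_mul]
  refine sum_le_sum fun i hi => ?_
  rcases (hq i hi).eq_or_lt with h0 | h0
  · simp [← h0]
  · exact mul_le_mul_of_nonneg_left (logb_le_logb_of_le hb h0 (single_le_sum hq hi)) h0.le

lemma sum_mul_logb_div_sum {ι : Type*} (b : ℝ) (s : Finset ι) {q : ι → ℝ}
    (hq : ∀ i ∈ s, 0 ≤ q i) :
    ∑ i ∈ s, q i * logb b (q i / ∑ j ∈ s, q j) =
      ∑ i ∈ s, q i * logb b (q i) - (∑ i ∈ s, q i) * logb b (∑ i ∈ s, q i) := by
  rw [sum_mul, ← sum_sub_distrib]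
  refine sum_congr rfl fun i hi => ?_
  rcases (hq i hi).eq_or_lt with h0 | h0
  · simp [← h0]
  · have hsum : 0 < ∑ j ∈ s, q j := h0.trans_le (single_le_sum hq hi)
    rw [logb_div h0.ne' hsum.ne', mul_sub]

section Coarsening

variable {I J K : Type*} [Fintype I]

lemma Pclass_eq_sum_filter (q : I → ℝ) (c : I → J) (j : J) :
    Pclass q c j = ∑ i with c i = j, q i :=
  (sum_filter _ _).symm

lemma Pclass_nonneg {q : I → ℝ} (hq : ∀ i, 0 ≤ q i) (c : I → J) (j : J) : 0 ≤ Pclass q c j := by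
  rw [Pclass_eq_sum_filter]
  exact sum_nonneg fun i _ => hq i

lemma Pclass_comp [Fintype J] (q : I → ℝ) (c : I → J) (g : J → K) (k : K) :
    Pclass q (g ∘ c) k = Pclass (Pclass q c) g k := by
  simp only [Pclass, comp_apply, ite_sum_zero, ← ite_and]
  rw [sum_comm]
  refine sum_congr rfl fun i _ => ?_
  simp_rw [and_comm, ite_and, sum_ite_eq, mem_univ, if_true]

lemma semEntropy_le_shEntropy [Fintype K] {q : I → ℝ} (hq : ∀ i, 0 ≤ q i) (c : I → K) :
    semEntropy q c ≤ shEntropy q := by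
  rw [semEntropy, shEntropy, neg_le_neg_iff, ← sum_fiberwise univ c]
  gcongr with k
  rw [Pclass_eq_sum_filter]
  exact sum_mul_logb_le_mul_logb_sum one_lt_two _ fun i _ => hq i

lemma semEntropy_comp_le [Fintype J] [Fintype K] {q : I → ℝ} (hq : ∀ i, 0 ≤ q i) (c : I → J)
    (g : J → K) :
    semEntropy q (g ∘ c) ≤ semEntropy q c := by
  have hcomp : semEntropy q (g ∘ c) = semEntropy (Pclass q c) g := by
    simp only [semEntropy, Pclass_comp]
  rw [hcomp]
  exact semEntropy_le_shEntropy (Pclass_nonneg hq c) g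

end Coarsening

lemma margU_PclassV {U V T : Type*} [Fintype V] [Fintype T] (p : U → V → ℝ) (cV : V → T) :
    margU (PclassV p cV) = margU p := by
  ext u
  simp only [margU, PclassV]
  rw [sum_comm]
  simp

section Joint

variable {U V S T : Type*} [Fintype U] [Fintype V]

lemma shJointEntropy_eq_shEntropy_uncurry (p : U → V → ℝ) :
    shJointEntropy p = shEntropy (uncurry p) := by
  simp only [shJointEntropy, shEntropy, Fintype.sum_prod_type, uncurry_apply_pair]

lemma Pclass_uncurry_prodMap (p : U → V → ℝ) (cU : U → S) (cV : V → T) (s : S) (t : T) :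
    Pclass (uncurry p) (Prod.map cU cV) (s, t) = PjointClass p cU cV s t := by
  simp [Pclass, PjointClass, Fintype.sum_prod_type, Prod.ext_iff]

lemma semJointEntropy_eq_semEntropy_uncurry [Fintype S] [Fintype T] (p : U → V → ℝ) (cU : U → S)
    (cV : V → T) :
    semJointEntropy p cU cV = semEntropy (uncurry p) (Prod.map cU cV) := by
  simp only [semJointEntropy, semEntropy, Fintype.sum_prod_type, Pclass_uncurry_prodMap]

lemma semJointEntropy_le_shJointEntropy [Fintype S] [Fintype T] {p : U → V → ℝ}
    (hp : ∀ u v, 0 ≤ p u v) (cU : U → S) (cV : V → T) :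
    semJointEntropy p cU cV ≤ shJointEntropy p := by
  rw [semJointEntropy_eq_semEntropy_uncurry, shJointEntropy_eq_shEntropy_uncurry]
  exact semEntropy_le_shEntropy (fun x : U × V => hp x.1 x.2) _

lemma semJointEntropy_comp_le {S' T' : Type*} [Fintype S] [Fintype T] [Fintype S'] [Fintype T']
    {p : U → V → ℝ} (hp : ∀ u v, 0 ≤ p u v) (cU : U → S) (cV : V → T) (gU : S → S') (gV : T → T') :
    semJointEntropy p (gU ∘ cU) (gV ∘ cV) ≤ semJointEntropy p cU cV := by
  rw [semJointEntropy_eq_semEntropy_uncurry, semJointEntropy_eq_semEntropy_uncurry,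
    ← Prod.map_comp_map]
  exact semEntropy_comp_le (fun x : U × V => hp x.1 x.2) _ _

lemma neg_sum_mul_logb_div_margU {p : U → V → ℝ} (hp : ∀ u v, 0 ≤ p u v) :
    -∑ u, ∑ v, p u v * logb 2 (p u v / margU p u) = shJointEntropy p - shEntropy (margU p) := by
  simp only [margU, sum_mul_logb_div_sum 2 univ fun v _ => hp _ v, sum_sub_distrib,
    shJointEntropy, shEntropy]
  ring

lemma PjointClass_id_left (p : U → V → ℝ) (cV : V → T) :
    PjointClass p id cV = PclassV p cV := by
  ext u t
  simp [PjointClass, PclassV, ite_and]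

lemma semCondEntropyV_eq_semJointEntropy_id_sub [Fintype T] {p : U → V → ℝ}
    (hp : ∀ u v, 0 ≤ p u v) (cV : V → T) :
    semCondEntropyV p cV = semJointEntropy p id cV - shEntropy (margU p) := by
  have hq : ∀ u t, 0 ≤ PclassV p cV u t := fun u => Pclass_nonneg (hp u) cV
  calc semCondEntropyV p cV
      = -∑ u, ∑ t, PclassV p cV u t * logb 2 (PclassV p cV u t / margU (PclassV p cV) u) := by
        rw [margU_PclassV]; rfl
    _ = shJointEntropy (PclassV p cV) - shEntropy (margU p) := by
        rw [neg_sum_mul_logb_div_margU hq, margU_PclassV]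
    _ = semJointEntropy p id cV - shEntropy (margU p) := by
        rw [← PjointClass_id_left]; rfl

end Joint

theorem semantic_mutual_information_chain_rule_general
    {U V S T : Type*} [Fintype U] [Fintype V] [Fintype S] [Fintype T]
    (p : U → V → ℝ) (hp0 : ∀ u v, 0 ≤ p u v)
    (cU : U → S)
    (cV : V → T) :
    downSMI p cU cV ≤ semEntropy (margV p) cV - (shJointEntropy p - shEntropy (margU p)) ∧
    semEntropy (margV p) cV - (shJointEntropy p - shEntropy (margU p)) ≤ mutualInfo p ∧
    mutualInfo p ≤ shEntropy (margV p) - semCondEntropyV p cV ∧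
    shEntropy (margV p) - semCondEntropyV p cV ≤ upSMI p cU cV := by
  have hU : semEntropy (margU p) cU ≤ shEntropy (margU p) :=
    semEntropy_le_shEntropy (fun u => sum_nonneg fun v _ => hp0 u v) cU
  have hV : semEntropy (margV p) cV ≤ shEntropy (margV p) :=
    semEntropy_le_shEntropy (fun v => sum_nonneg fun u _ => hp0 u v) cV
  have hsemJoint : semJointEntropy p cU cV ≤ semJointEntropy p id cV :=
    semJointEntropy_comp_le hp0 id cV cU id
  have hjoint : semJointEntropy p id cV ≤ shJointEntropy p :=
    semJointEntropy_le_shJointEntropy hp0 id cV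
  have hcond := semCondEntropyV_eq_semJointEntropy_id_sub hp0 cV
  refine ⟨?_, ?_, ?_, ?_⟩ <;> simp only [downSMI, mutualInfo, upSMI] <;> linarith

/-- Chain rule of semantic mutual information: For any joint pmf `p` on `U × V`
and any partitions of `U` and `V` (encoded by surjective class-index maps `cU`, `cV`),
`I_s(Ũ;Ṽ) ≤ H_s(Ṽ) − H(V|U) ≤ I(U;V) ≤ H(V) − H_s(Ṽ|U) ≤ I^s(Ũ;Ṽ)`,
where `H(V|U) = H(U,V) − H(U)`, `I_s(Ũ;Ṽ) = H_s(Ũ) + H_s(Ṽ) − H(U,V)` and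
`I^s(Ũ;Ṽ) = H(U) + H(V) − H_s(Ũ,Ṽ)`. -/
theorem semantic_mutual_information_chain_rule
    {U V S T : Type*} [Fintype U] [Fintype V] [Fintype S] [Fintype T]
    (p : U → V → ℝ) (hp0 : ∀ u v, 0 ≤ p u v) (hp1 : ∑ u : U, ∑ v : V, p u v = 1)
    (cU : U → S) (hcU : Function.Surjective cU)
    (cV : V → T) (hcV : Function.Surjective cV) :
    downSMI p cU cV ≤ semEntropy (margV p) cV - (shJointEntropy p - shEntropy (margU p)) ∧
    semEntropy (margV p) cV - (shJointEntropy p - shEntropy (margU p)) ≤ mutualInfo p ∧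
    mutualInfo p ≤ shEntropy (margV p) - semCondEntropyV p cV ∧
    shEntropy (margV p) - semCondEntropyV p cV ≤ upSMI p cU cV :=
  semantic_mutual_information_chain_rule_general p hp0 cU cV
end

section
/- Let X and X̂ be finite sets, p a probability mass function on X, and fix partitions {X_s : s ∈ S} of X and {X̂_t : t ∈ T} of X̂. For any nonempty set P of conditional probability mass functions q(x̂|x), the minimum down semantic mutual information over P is at most the minimum mutual information over P: inf_{q ∈ P} I_s(X̃;X̂̃) ≤ inf_{q ∈ P} I(X;X̂), where both are computed from the joint distribution p(x)q(x̂|x). In particular, the semantic rate-distortion function is no more than the classical rate-distortion function computed over the same feasible set of test channels. -/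
open Finset
open scoped Classical

/-! Pointwise, merging the outcomes inside each class can only lower the entropy, so
`H_s(X̃) ≤ H(X)` and `H_s(X̂̃) ≤ H(X̂)`, whence `I_s(X̃;X̂̃) ≤ I(X;X̂)` for every test channel.
Passing to infima needs the down semantic mutual information to be bounded below over the
channels (`sInf` of a real set unbounded below is `0`): the semantic entropies are nonnegative and the joint entropy is at most
`|X| |X̂| / ln 2`. -/

section Entropy

variable {U V S T : Type*}

lemma Pclass_nonneg_s7 [Fintype U] {p : U → ℝ} (hp : ∀ u, 0 ≤ p u) (c : U → S) (s : S) :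
    0 ≤ Pclass p c s :=
  Finset.sum_nonneg fun u _ => by split_ifs <;> simp [hp u]

lemma sum_Pclass [Fintype U] [Fintype S] (p : U → ℝ) (c : U → S) :
    ∑ s, Pclass p c s = ∑ u, p u := by
  unfold Pclass
  rw [Finset.sum_comm]
  exact Finset.sum_congr rfl fun u _ => by simp

lemma le_Pclass [Fintype U] {p : U → ℝ} (hp : ∀ u, 0 ≤ p u) (c : U → S) (u : U) :
    p u ≤ Pclass p c (c u) := by
  simpa [Pclass] using Finset.single_le_sum (f := fun u' => if c u' = c u then p u' else 0)
    (fun u' _ => by split_ifs <;> simp [hp u']) (Finset.mem_univ u)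

lemma Pclass_le_one [Fintype U] [Fintype S] {p : U → ℝ} (hp : ∀ u, 0 ≤ p u)
    (hp1 : ∑ u, p u = 1) (c : U → S) (s : S) : Pclass p c s ≤ 1 := by
  rw [← hp1, ← sum_Pclass p c]
  exact Finset.single_le_sum (fun s _ => Pclass_nonneg_s7 hp c s) (Finset.mem_univ s)

lemma semEntropy_nonneg [Fintype U] [Fintype S] {p : U → ℝ} (hp : ∀ u, 0 ≤ p u)
    (hp1 : ∑ u, p u = 1) (c : U → S) : 0 ≤ semEntropy p c := by
  refine neg_nonneg.mpr (Finset.sum_nonpos fun s _ => ?_)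
  have h0 := Pclass_nonneg_s7 hp c s
  exact mul_nonpos_of_nonneg_of_nonpos h0
    (Real.logb_nonpos one_lt_two h0 (Pclass_le_one hp hp1 c s))

lemma semEntropy_le_shEntropy_s7 [Fintype U] [Fintype S] {p : U → ℝ} (hp : ∀ u, 0 ≤ p u)
    (c : U → S) : semEntropy p c ≤ shEntropy p := by
  have hterm : ∀ u, p u * Real.logb 2 (p u) ≤ p u * Real.logb 2 (Pclass p c (c u)) := by
    intro u
    rcases (hp u).eq_or_lt with h | h
    · simp [← h]
    · exact mul_le_mul_of_nonneg_left
        (Real.logb_le_logb_of_le one_lt_two h (le_Pclass hp c u)) (hp u)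
  refine neg_le_neg ?_
  calc ∑ u, p u * Real.logb 2 (p u)
      ≤ ∑ u, p u * Real.logb 2 (Pclass p c (c u)) := Finset.sum_le_sum fun u _ => hterm u
    _ = ∑ s, ∑ u, (if c u = s then p u else 0) * Real.logb 2 (Pclass p c s) := by
        rw [Finset.sum_comm]
        exact Finset.sum_congr rfl fun u _ => by simp
    _ = ∑ s, Pclass p c s * Real.logb 2 (Pclass p c s) := by
        simp only [Pclass, Finset.sum_mul]

lemma neg_inv_log_two_le_mul_logb {x : ℝ} (hx : 0 ≤ x) :
    -(Real.log 2)⁻¹ ≤ x * Real.logb 2 x := by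
  have hlog2 : 0 < Real.log 2 := Real.log_pos one_lt_two
  have h : -1 ≤ x * Real.log x := by linarith [Real.self_sub_one_le_mul_log hx]
  rw [Real.logb, ← mul_div_assoc, le_div_iff₀ hlog2, neg_mul, inv_mul_cancel₀ hlog2.ne']
  exact h

lemma shJointEntropy_le [Fintype U] [Fintype V] {p : U → V → ℝ} (hp : ∀ u v, 0 ≤ p u v) :
    shJointEntropy p ≤ Fintype.card U * Fintype.card V / Real.log 2 := by
  have hsum : ∑ _u : U, ∑ _v : V, -(Real.log 2)⁻¹
      ≤ ∑ u, ∑ v, p u v * Real.logb 2 (p u v) :=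
    Finset.sum_le_sum fun u _ => Finset.sum_le_sum fun v _ =>
      neg_inv_log_two_le_mul_logb (hp u v)
  simp only [Finset.sum_const, Finset.card_univ, nsmul_eq_mul] at hsum
  rw [shJointEntropy, neg_le]
  linarith [show (Fintype.card U * Fintype.card V : ℝ) / Real.log 2
    = Fintype.card U * (Fintype.card V * (Real.log 2)⁻¹) by ring]

lemma margU_nonneg [Fintype V] {p : U → V → ℝ} (hp : ∀ u v, 0 ≤ p u v) (u : U) :
    0 ≤ margU p u :=
  Finset.sum_nonneg fun v _ => hp u v

lemma margV_nonneg [Fintype U] {p : U → V → ℝ} (hp : ∀ u v, 0 ≤ p u v) (v : V) :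
    0 ≤ margV p v :=
  Finset.sum_nonneg fun u _ => hp u v

lemma sum_margV [Fintype U] [Fintype V] (p : U → V → ℝ) :
    ∑ v, margV p v = ∑ u, ∑ v, p u v :=
  Finset.sum_comm

lemma neg_shJointEntropy_le_downSMI [Fintype U] [Fintype V] [Fintype S] [Fintype T]
    {p : U → V → ℝ} (hp : ∀ u v, 0 ≤ p u v) (hp1 : ∑ u, ∑ v, p u v = 1)
    (cU : U → S) (cV : V → T) : -shJointEntropy p ≤ downSMI p cU cV := by
  have hU := semEntropy_nonneg (margU_nonneg hp) hp1 cU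
  have hV := semEntropy_nonneg (margV_nonneg hp) ((sum_margV p).trans hp1) cV
  rw [downSMI]
  linarith

lemma downSMI_le_mutualInfo [Fintype U] [Fintype V] [Fintype S] [Fintype T]
    {p : U → V → ℝ} (hp : ∀ u v, 0 ≤ p u v) (cU : U → S) (cV : V → T) :
    downSMI p cU cV ≤ mutualInfo p := by
  have hU := semEntropy_le_shEntropy_s7 (margU_nonneg hp) cU
  have hV := semEntropy_le_shEntropy_s7 (margV_nonneg hp) cV
  rw [downSMI, mutualInfo]
  linarith

lemma sum_sum_mul_eq_one [Fintype U] [Fintype V] {p : U → ℝ} {q : U → V → ℝ}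
    (hp1 : ∑ u, p u = 1) (hq1 : ∀ u, ∑ v, q u v = 1) : ∑ u, ∑ v, p u * q u v = 1 := by
  simp only [← Finset.mul_sum, hq1, mul_one, hp1]

end Entropy

theorem inf_down_smi_le_inf_mutual_info_general
    {X Xhat S T : Type*} [Fintype X] [Fintype Xhat] [Fintype S] [Fintype T]
    (p : X → ℝ) (hp0 : ∀ x, 0 ≤ p x) (hp1 : ∑ x : X, p x = 1)
    (cX : X → S)
    (cT : Xhat → T)
    (P : Set (X → Xhat → ℝ)) (hPne : P.Nonempty)
    (hP : ∀ q ∈ P, (∀ x xh, 0 ≤ q x xh) ∧ ∀ x, ∑ xh : Xhat, q x xh = 1) :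
    sInf ((fun q => downSMI (fun x xh => p x * q x xh) cX cT) '' P) ≤
    sInf ((fun q => mutualInfo (fun x xh => p x * q x xh)) '' P) := by
  have hr0 : ∀ q ∈ P, ∀ x xh, 0 ≤ p x * q x xh := fun q hq x xh =>
    mul_nonneg (hp0 x) ((hP q hq).1 x xh)
  have hbdd : BddBelow ((fun q => downSMI (fun x xh => p x * q x xh) cX cT) '' P) := by
    refine ⟨-(Fintype.card X * Fintype.card Xhat / Real.log 2), ?_⟩
    rintro _ ⟨q, hq, rfl⟩
    exact (neg_le_neg (shJointEntropy_le (hr0 q hq))).trans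
      (neg_shJointEntropy_le_downSMI (hr0 q hq) (sum_sum_mul_eq_one hp1 (hP q hq).2) cX cT)
  refine le_csInf (hPne.image _) ?_
  rintro _ ⟨q, hq, rfl⟩
  exact (csInf_le hbdd ⟨q, hq, rfl⟩).trans (downSMI_le_mutualInfo (hr0 q hq) cX cT)

/-- For a pmf `p` on `X`, partitions of `X` and `X̂` (surjective class-index maps
`cX`, `cT`), and any nonempty set `P` of test channels `q(x̂|x)`, the infimum of the down
semantic mutual information over `P` is at most the infimum of the mutual information over `P`,
both computed from the joint distribution `r(x,x̂) = p(x) q(x̂|x)`.  In particular the semantic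
rate-distortion function is no more than the classical rate-distortion function computed over
the same feasible set of test channels. -/
theorem inf_down_smi_le_inf_mutual_info
    {X Xhat S T : Type*} [Fintype X] [Fintype Xhat] [Fintype S] [Fintype T]
    (p : X → ℝ) (hp0 : ∀ x, 0 ≤ p x) (hp1 : ∑ x : X, p x = 1)
    (cX : X → S) (hcX : Function.Surjective cX)
    (cT : Xhat → T) (hcT : Function.Surjective cT)
    (P : Set (X → Xhat → ℝ)) (hPne : P.Nonempty)
    (hP : ∀ q ∈ P, (∀ x xh, 0 ≤ q x xh) ∧ ∀ x, ∑ xh : Xhat, q x xh = 1) :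
    sInf ((fun q => downSMI (fun x xh => p x * q x xh) cX cT) '' P) ≤
    sInf ((fun q => mutualInfo (fun x xh => p x * q x xh)) '' P) :=
  inf_down_smi_le_inf_mutual_info_general p hp0 hp1 cX cT P hPne hP
end
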